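/- Under the Newton tracking primal–dual iteration, assume additionally that ε − α·λ_max(I − 𝐖) > 4L_f²/μ_f and set δ := 1 − 4L_f²/(μ_f(ε − α·λ_max(I − 𝐖))) > 0 and Q := εI − α(I − 𝐖). Then for every t ≥ 0: (x* − x^t)ᵀQ(x* − x^t) − (x* − x^{t+1})ᵀQ(x* − x^{t+1}) + (1/α)(‖v* − v^t‖² − ‖v* − v^{t+1}‖²) ≥ δ²·(ε − α·λ_max(I − 𝐖))·‖x^t − x^{t+1}‖² + (1/α)‖v^{t+1} − v^t‖² + (μ_f·δ/(1+δ))·‖x* − x^{t+1}‖². -/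

import Mathlib

open Matrix Kronecker
open scoped InnerProductSpace

noncomputable section

/-- Local decision space `ℝ^p`. -/
abbrev Ep (p : ℕ) : Type := EuclideanSpace ℝ (Fin p)

/-- Stacked space `ℝ^{np}`. -/
abbrev Vnp (n p : ℕ) : Type := EuclideanSpace ℝ (Fin n × Fin p)

/-- The `i`-th block `x_i ∈ ℝ^p` of a stacked vector `x ∈ ℝ^{np}`. -/
def blk {n p : ℕ} (x : Vnp n p) (i : Fin n) : Ep p := WithLp.toLp 2 (fun j => x (i, j))

/-- Aggregate objective `f(x) = ∑ i, f_i(x_i)`. -/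
def aggF {n p : ℕ} (f : Fin n → Ep p → ℝ) (x : Vnp n p) : ℝ := ∑ i, f i (blk x i)

/-- Stacked gradient `∇f(x) = [∇f_1(x_1); …; ∇f_n(x_n)]`. -/
def aggGrad {n p : ℕ} (g : Fin n → Ep p → Ep p) (x : Vnp n p) : Vnp n p :=
  WithLp.toLp 2 (fun ij : Fin n × Fin p => g ij.1 (blk x ij.1) ij.2)

/-- Block-diagonal Hessian `∇²f(x)` applied to `w`. -/
def aggHess {n p : ℕ} (h : Fin n → Ep p → (Ep p →L[ℝ] Ep p)) (x w : Vnp n p) : Vnp n p :=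
  WithLp.toLp 2 (fun ij : Fin n × Fin p => h ij.1 (blk x ij.1) (blk w ij.1) ij.2)

/-- `𝐖 = W ⊗ I_p`. -/
def bigW {n : ℕ} (p : ℕ) (W : Matrix (Fin n) (Fin n) ℝ) :
    Matrix (Fin n × Fin p) (Fin n × Fin p) ℝ :=
  W ⊗ₖ (1 : Matrix (Fin p) (Fin p) ℝ)

/-- `I − 𝐖`. -/
def IWmat {n : ℕ} (p : ℕ) (W : Matrix (Fin n) (Fin n) ℝ) :
    Matrix (Fin n × Fin p) (Fin n × Fin p) ℝ :=
  1 - bigW p W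

/-- Largest eigenvalue of a (square, real) matrix. -/
def lamMax {m : Type*} [Fintype m] [DecidableEq m] (A : Matrix m m ℝ) : ℝ :=
  sSup {r : ℝ | Module.End.HasEigenvalue (Matrix.toLin' A) r}

/-- Smallest nonzero eigenvalue of a (square, real) matrix. -/
def lamMinNZ {m : Type*} [Fintype m] [DecidableEq m] (A : Matrix m m ℝ) : ℝ :=
  sInf {r : ℝ | r ≠ 0 ∧ Module.End.HasEigenvalue (Matrix.toLin' A) r}

/-- The square root of a positive semidefinite matrix, as `Matrix.PosSemidef.sqrt` was defined
in the older Mathlib (removed since). -/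
def Matrix.PosSemidef.sqrt {m : Type*} [Fintype m] [DecidableEq m] {A : Matrix m m ℝ}
    (hA : A.PosSemidef) : Matrix m m ℝ :=
  (hA.1.eigenvectorUnitary : Matrix m m ℝ) * diagonal ((↑) ∘ (fun i => √(hA.1.eigenvalues i)))
    * (star hA.1.eigenvectorUnitary : Matrix m m ℝ)

/-- `δ = 1 − 4L_f²/(μ_f(ε − α·λ_max(I−𝐖)))`. -/
def deltaNT (μf Lf α ε lmax : ℝ) : ℝ := 1 - 4 * Lf ^ 2 / (μf * (ε - α * lmax))

/-- The contraction constant `δ'` from the linear convergence theorem. -/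
def deltaNT' (μf Lf α ε lmax lminhat β φ : ℝ) : ℝ :=
  min (μf * deltaNT μf Lf α ε lmax /
        ((1 + deltaNT μf Lf α ε lmax) * (ε + β * φ * Lf ^ 2 / (α * lminhat))))
      (α * (deltaNT μf Lf α ε lmax) ^ 2 * (ε - α * lmax) * lminhat /
        (β * ε ^ 2 / (β - 1) + β * φ * (2 * Lf + α * lmax) ^ 2 / (φ - 1)))

/-!
Write `s = xᵗ - xᵗ⁺¹`, `b = x* - xᵗ⁺¹` and `Q = εI - α(I - 𝐖)`. Eliminating `∇f(xᵗ)` with the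
primal step, `vᵗ⁺¹` with the dual step and `(x*, v*)` with the optimality conditions, and using
`(I - 𝐖)^{1/2} (I - 𝐖)^{1/2} = I - 𝐖`, the left-hand side equals exactly
`sᵀQs + ‖vᵗ⁺¹ - vᵗ‖²/α + 2⟨b, ∇f(x*) - ∇f(xᵗ⁺¹)⟩ - 2⟨b, ∇f(xᵗ) - ∇f(xᵗ⁺¹) - ∇²f(xᵗ)s⟩`.
Strong convexity bounds the first inner product below by `μ_f‖b‖²`; since each Hessian is a
symmetric operator with quadratic form in `[0, L_f]`, it has norm at most `L_f`, and the mean value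
theorem bounds the Newton residual by `2L_f‖s‖`; and `sᵀQs ≥ (ε - αλ_max)‖s‖²`. What is left is a
quadratic inequality in `‖s‖, ‖b‖`, which the choice of `δ` turns into a sum of squares.
-/

namespace Matrix

variable {m : Type*} [Fintype m] [DecidableEq m]

lemma PosSemidef.isHermitian_sqrt {A : Matrix m m ℝ} (hA : A.PosSemidef) :
    hA.sqrt.IsHermitian := by
  rw [PosSemidef.sqrt, star_eq_conjTranspose]
  exact isHermitian_mul_mul_conjTranspose _ (isHermitian_diagonal _)

lemma PosSemidef.sqrt_mul_sqrt {A : Matrix m m ℝ} (hA : A.PosSemidef) :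
    hA.sqrt * hA.sqrt = A := by
  have hU : star (hA.isHermitian.eigenvectorUnitary : Matrix m m ℝ)
      * hA.isHermitian.eigenvectorUnitary = 1 :=
    Unitary.star_mul_self_of_mem hA.isHermitian.eigenvectorUnitary.prop
  conv_rhs => rw [hA.isHermitian.spectral_theorem, Unitary.conjStarAlgAut_apply]
  simp only [PosSemidef.sqrt, Matrix.mul_assoc]
  rw [← Matrix.mul_assoc (star _) _ (_ * _), hU, Matrix.one_mul,
    ← Matrix.mul_assoc (diagonal _) (diagonal _), diagonal_mul_diagonal]
  congr 3
  ext i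
  simp [Real.mul_self_sqrt (hA.eigenvalues_nonneg i)]

lemma PosSemidef.toEuclideanLin_sqrt_sqrt {A : Matrix m m ℝ} (hA : A.PosSemidef)
    (x : EuclideanSpace ℝ m) :
    toEuclideanLin hA.sqrt (toEuclideanLin hA.sqrt x) = toEuclideanLin A x := by
  conv_rhs => rw [← hA.sqrt_mul_sqrt]
  simp

lemma setOf_hasEigenvalue_toLin' (A : Matrix m m ℝ) :
    {r : ℝ | Module.End.HasEigenvalue (toLin' A) r} = spectrum ℝ A := by
  ext r
  rw [Set.mem_ofPred_eq, Module.End.hasEigenvalue_iff_mem_spectrum, spectrum_toLin']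

lemma IsHermitian.eigenvalues_le_lamMax {A : Matrix m m ℝ} (hA : A.IsHermitian) (i : m) :
    hA.eigenvalues i ≤ lamMax A := by
  rw [lamMax, setOf_hasEigenvalue_toLin']
  exact le_csSup A.finite_spectrum.bddAbove (hA.eigenvalues_mem_spectrum_real i)

lemma IsHermitian.inner_toEuclideanLin_self_le_lamMax {A : Matrix m m ℝ} (hA : A.IsHermitian)
    (x : EuclideanSpace ℝ m) : ⟪x, toEuclideanLin A x⟫_ℝ ≤ lamMax A * ‖x‖ ^ 2 := by
  set b := hA.eigenvectorBasis
  have hAb : ∀ j, toEuclideanLin A (b j) = hA.eigenvalues j • b j := by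
    intro j; ext i; exact congrFun (hA.mulVec_eigenvectorBasis j) i
  have hsymm := isSymmetric_toEuclideanLin_iff.mpr hA
  have hexpand : ⟪x, toEuclideanLin A x⟫_ℝ = ∑ j, hA.eigenvalues j * ⟪x, b j⟫_ℝ ^ 2 := by
    rw [← b.sum_inner_mul_inner x]
    refine Finset.sum_congr rfl fun j _ ↦ ?_
    rw [← hsymm, hAb, real_inner_smul_left, real_inner_comm (b j) x]
    ring
  have hnorm : ‖x‖ ^ 2 = ∑ j, ⟪x, b j⟫_ℝ ^ 2 := by
    rw [← real_inner_self_eq_norm_sq, ← b.sum_inner_mul_inner x x]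
    simp_rw [real_inner_comm (b _) x, sq]
  rw [hexpand, hnorm, Finset.mul_sum]
  gcongr with j
  exact hA.eigenvalues_le_lamMax j

end Matrix

section Calculus

variable {E : Type*} [NormedAddCommGroup E] [InnerProductSpace ℝ E]

lemma ContinuousLinearMap.norm_le_of_abs_inner_self_le {T : E →L[ℝ] E}
    (hT : (T : E →ₗ[ℝ] E).IsSymmetric) {C : ℝ} (hC : 0 ≤ C)
    (hTC : ∀ x, |⟪T x, x⟫_ℝ| ≤ C * ‖x‖ ^ 2) : ‖T‖ ≤ C := by
  rw [T.norm_eq_iSup_rayleighQuotient hT]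
  refine ciSup_le fun x ↦ ?_
  rw [rayleighQuotient, reApplyInnerSelf_apply, abs_div, abs_sq]
  exact div_le_of_le_mul₀ (sq_nonneg _) hC (hTC x)

variable {f : E → ℝ} {g : E → E} {h : E → E →L[ℝ] E}

lemma mul_norm_sub_sq_le_inner_sub (hh : ∀ z, HasFDerivAt g (h z) z) {μ : ℝ}
    (hlow : ∀ z w, μ * ‖w‖ ^ 2 ≤ ⟪h z w, w⟫_ℝ) (u w : E) :
    μ * ‖u - w‖ ^ 2 ≤ ⟪g u - g w, u - w⟫_ℝ := by
  set d := u - w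
  let φ : ℝ → ℝ := fun t ↦ ⟪g (w + t • d), d⟫_ℝ
  have hφ : ∀ t, HasDerivAt φ ⟪h (w + t • d) d, d⟫_ℝ t := fun t ↦ by
    have hline : HasDerivAt (fun t : ℝ ↦ w + t • d) d t := by
      simpa using ((hasDerivAt_id t).smul_const d).const_add w
    exact ((hh _).comp_hasDerivAt t hline).inner ℝ (hasDerivAt_const t d) |>.congr_deriv
      (by simp)
  have := mul_sub_le_image_sub_of_le_deriv (fun t ↦ (hφ t).differentiableAt)
    (fun t ↦ (hφ t).deriv ▸ hlow _ d) zero_le_one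
  simpa [φ, d, inner_sub_left] using this

lemma norm_newton_residual_le (hh : ∀ z, HasFDerivAt g (h z) z) {L : ℝ}
    (hL : ∀ z, ‖h z‖ ≤ L) (u w : E) : ‖g u - g w - h u (u - w)‖ ≤ 2 * L * ‖u - w‖ := by
  have hderiv : ∀ z, HasFDerivAt (fun y ↦ g y - h u y) (h z - h u) z := fun z ↦
    (hh z).sub (h u).hasFDerivAt
  have hbound : ∀ z, ‖h z - h u‖ ≤ 2 * L := fun z ↦
    (norm_sub_le _ _).trans (by linarith [hL z, hL u])
  have := convex_univ.norm_image_sub_le_of_norm_hasFDerivWithin_le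
    (fun z _ ↦ (hderiv z).hasFDerivWithinAt) (fun z _ ↦ hbound z) (Set.mem_univ w)
    (Set.mem_univ u)
  rwa [sub_sub_sub_comm, ← map_sub] at this

variable [CompleteSpace E]

lemma inner_hessian_comm (hg : ∀ z, HasGradientAt f (g z) z) (hh : ∀ z, HasFDerivAt g (h z) z)
    (z v w : E) : ⟪h z v, w⟫_ℝ = ⟪h z w, v⟫_ℝ := by
  let D :=
    (InnerProductSpace.toDual ℝ E : E ≃ₗᵢ[ℝ] _).toContinuousLinearEquiv.toContinuousLinearMap
  simpa [D, InnerProductSpace.toDual_apply_apply] using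
    second_derivative_symmetric (fun y ↦ (hg y).hasFDerivAt) (D.hasFDerivAt.comp z (hh z)) v w

lemma norm_hessian_le (hg : ∀ z, HasGradientAt f (g z) z) (hh : ∀ z, HasFDerivAt g (h z) z)
    {L : ℝ} (hL : 0 ≤ L) (hlow : ∀ z w, 0 ≤ ⟪h z w, w⟫_ℝ)
    (hup : ∀ z w, ⟪h z w, w⟫_ℝ ≤ L * ‖w‖ ^ 2) (z : E) : ‖h z‖ ≤ L := by
  refine (h z).norm_le_of_abs_inner_self_le (fun v w ↦ ?_) hL fun w ↦ ?_
  · simpa [real_inner_comm v] using inner_hessian_comm hg hh z v w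
  · exact abs_le.mpr ⟨by linarith [hlow z w, mul_nonneg hL (sq_nonneg ‖w‖)], hup z w⟩

end Calculus

section Blocks

variable {n p : ℕ}

lemma inner_eq_sum_inner_blk (x y : Vnp n p) : ⟪x, y⟫_ℝ = ∑ i, ⟪blk x i, blk y i⟫_ℝ := by
  simp [PiLp.inner_apply, Fintype.sum_prod_type, blk]

lemma norm_sq_eq_sum_norm_sq_blk (x : Vnp n p) : ‖x‖ ^ 2 = ∑ i, ‖blk x i‖ ^ 2 := by
  simp_rw [← real_inner_self_eq_norm_sq, inner_eq_sum_inner_blk]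

lemma norm_le_of_forall_norm_blk_le {x y : Vnp n p} {c : ℝ} (hc : 0 ≤ c)
    (hxy : ∀ i, ‖blk x i‖ ≤ c * ‖blk y i‖) : ‖x‖ ≤ c * ‖y‖ := by
  refine pow_le_pow_iff_left₀ (norm_nonneg _) (by positivity) two_ne_zero |>.mp ?_
  rw [mul_pow, norm_sq_eq_sum_norm_sq_blk, norm_sq_eq_sum_norm_sq_blk, Finset.mul_sum]
  gcongr with i
  rw [← mul_pow]
  exact pow_le_pow_left₀ (norm_nonneg _) (hxy i) 2

variable {f : Fin n → Ep p → ℝ} {g : Fin n → Ep p → Ep p} {h : Fin n → Ep p → (Ep p →L[ℝ] Ep p)}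

lemma mul_norm_sub_sq_le_inner_aggGrad_sub (hh : ∀ i z, HasFDerivAt (g i) (h i z) z) {μ : ℝ}
    (hlow : ∀ i z w, μ * ‖w‖ ^ 2 ≤ ⟪h i z w, w⟫_ℝ) (u w : Vnp n p) :
    μ * ‖u - w‖ ^ 2 ≤ ⟪aggGrad g u - aggGrad g w, u - w⟫_ℝ := by
  rw [inner_eq_sum_inner_blk, norm_sq_eq_sum_norm_sq_blk, Finset.mul_sum]
  gcongr with i
  exact mul_norm_sub_sq_le_inner_sub (hh i) (hlow i) (blk u i) (blk w i)

lemma norm_aggGrad_newton_residual_le (hg : ∀ i z, HasGradientAt (f i) (g i z) z)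
    (hh : ∀ i z, HasFDerivAt (g i) (h i z) z) {L : ℝ} (hL : 0 ≤ L)
    (hlow : ∀ i z w, 0 ≤ ⟪h i z w, w⟫_ℝ) (hup : ∀ i z w, ⟪h i z w, w⟫_ℝ ≤ L * ‖w‖ ^ 2)
    (u w : Vnp n p) :
    ‖aggGrad g u - aggGrad g w - aggHess h u (u - w)‖ ≤ 2 * L * ‖u - w‖ :=
  norm_le_of_forall_norm_blk_le (by positivity) fun i ↦
    norm_newton_residual_le (hh i) (norm_hessian_le (hg i) (hh i) hL (hlow i) (hup i))
      (blk u i) (blk w i)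

end Blocks

section Descent

variable {V : Type*} [NormedAddCommGroup V] [InnerProductSpace ℝ V]

lemma newton_tracking_descent_identity {A U : V →ₗ[ℝ] V} (hU : U.IsSymmetric)
    (hUU : ∀ z, U (U z) = A z) {grad : V → V} {α ε : ℝ} (hα : α ≠ 0) {x x' v v' xs vs d : V}
    (hprimal : d + ε • (x - x') = grad x + U v + α • A x) (hdual : v' = v + α • U x')
    (hK1 : grad xs + U vs = 0) (hK2 : U xs = 0) :
    ⟪xs - x, ε • (xs - x) - α • A (xs - x)⟫_ℝ - ⟪xs - x', ε • (xs - x') - α • A (xs - x')⟫_ℝ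
        + (1 / α) * (‖vs - v‖ ^ 2 - ‖vs - v'‖ ^ 2)
      = ⟪x - x', ε • (x - x') - α • A (x - x')⟫_ℝ + (1 / α) * ‖v' - v‖ ^ 2
        + 2 * ⟪xs - x', grad xs - grad x + d⟫_ℝ := by
  set s := x - x'
  set b := xs - x'
  have hA : ⟪s, A b⟫_ℝ = ⟪b, A s⟫_ℝ := by
    rw [← hUU, ← hUU, ← hU, real_inner_comm, hU]
  have hQ : ⟪b - s, ε • (b - s) - α • A (b - s)⟫_ℝ
      = ⟪b, ε • b - α • A b⟫_ℝ - 2 * ⟪b, ε • s - α • A s⟫_ℝ + ⟪s, ε • s - α • A s⟫_ℝ := by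
    simp only [map_sub, smul_sub, inner_sub_left, inner_sub_right, real_inner_smul_right]
    linear_combination α * hA - ε * real_inner_comm b s
  have hgrad : grad xs - grad x + d = U (v' - vs) - (ε • s - α • A s) := by
    have hUv' : U v' = U v + α • A x' := by rw [hdual, map_add, map_smul, hUU]
    have hx : grad x = d + ε • s - U v - α • A x := by rw [hprimal]; abel
    rw [eq_neg_of_add_eq_zero_left hK1, hx, map_sub, hUv']
    simp only [s, map_sub, smul_sub]
    abel
  have hdualTerm : ⟪b, U (v' - vs)⟫_ℝ = (1 / α) * ⟪vs - v', v' - v⟫_ℝ := by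
    have hUb : U b = -U x' := by simp [b, hK2]
    rw [← hU, hUb, show v' - v = α • U x' by rw [hdual]; abel, real_inner_comm,
      inner_smul_right, inner_neg_right]
    field_simp
    rw [← inner_neg_left, neg_sub]
  rw [show xs - x = b - s by simp only [b, s]; abel, show vs - v = (vs - v') + (v' - v) by abel,
    hQ, norm_add_sq_real, hgrad, inner_sub_right b (U _), hdualTerm]
  ring

end Descent

lemma deltaNT_quadratic_bound {μ L α ε lmax a c : ℝ} (hμ : 0 < μ)
    (hcond : 4 * L ^ 2 / μ < ε - α * lmax) :
    deltaNT μ L α ε lmax ^ 2 * (ε - α * lmax) * a ^ 2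
        + μ * deltaNT μ L α ε lmax / (1 + deltaNT μ L α ε lmax) * c ^ 2
      ≤ (ε - α * lmax) * a ^ 2 - 4 * L * (a * c) + 2 * μ * c ^ 2 := by
  set θ := ε - α * lmax
  set δ := deltaNT μ L α ε lmax
  have hθ : 0 < θ := (by positivity : 0 ≤ 4 * L ^ 2 / μ).trans_lt hcond
  have hδdef : δ = 1 - 4 * L ^ 2 / (μ * θ) := rfl
  have hrel : μ * ((1 - δ) * θ) = 4 * L ^ 2 := by
    rw [hδdef]
    field_simp
    ring
  have hδ : 0 < δ := by
    rwa [hδdef, sub_pos, ← div_div, div_lt_one hθ]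
  rw [← sub_nonneg, ← mul_nonneg_iff_of_pos_left (by positivity : 0 < μ * (1 + δ))]
  refine le_of_le_of_eq
    (by positivity : 0 ≤ (2 * L * (1 + δ) * a - μ * c) ^ 2 + μ ^ 2 * (1 + δ) * c ^ 2) ?_
  field_simp
  linear_combination (δ * (1 + δ) ^ 2 * a ^ 2 - (1 + δ) ^ 3 * a ^ 2) * hrel

theorem newton_tracking_refined_descent_inequality_general
    {n p : ℕ}
    (W : Matrix (Fin n) (Fin n) ℝ)
    (hpsd : (IWmat p W).PosSemidef)
    (f : Fin n → Ep p → ℝ) (g : Fin n → Ep p → Ep p)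
    (h : Fin n → Ep p → (Ep p →L[ℝ] Ep p))
    (μf Lf : ℝ) (hμpos : 0 < μf) (hμL : μf ≤ Lf)
    (hg : ∀ i z, HasGradientAt (f i) (g i z) z)
    (hh : ∀ i z, HasFDerivAt (g i) (h i z) z)
    (hlow : ∀ i z w, μf * ‖w‖ ^ 2 ≤ ⟪(h i z) w, w⟫_ℝ)
    (hup : ∀ i z w, ⟪(h i z) w, w⟫_ℝ ≤ Lf * ‖w‖ ^ 2)
    (α ε : ℝ) (hα : 0 < α)
    (x v : ℕ → Vnp n p)
    (hprimal : ∀ t, aggHess h (x t) (x t - x (t + 1)) + ε • (x t - x (t + 1)) =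
      aggGrad g (x t) + Matrix.toEuclideanLin hpsd.sqrt (v t)
        + α • Matrix.toEuclideanLin (IWmat p W) (x t))
    (hdual : ∀ t, v (t + 1) = v t + α • Matrix.toEuclideanLin hpsd.sqrt (x (t + 1)))
    (xs vs : Vnp n p)
    (hK1 : aggGrad g xs + Matrix.toEuclideanLin hpsd.sqrt vs = 0)
    (hK2 : Matrix.toEuclideanLin hpsd.sqrt xs = 0)
    (hcond : 4 * Lf ^ 2 / μf < ε - α * lamMax (IWmat p W)) :
    ∀ t : ℕ,
      ⟪xs - x t, ε • (xs - x t) - α • Matrix.toEuclideanLin (IWmat p W) (xs - x t)⟫_ℝ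
        - ⟪xs - x (t + 1),
            ε • (xs - x (t + 1))
              - α • Matrix.toEuclideanLin (IWmat p W) (xs - x (t + 1))⟫_ℝ
        + (1 / α) * (‖vs - v t‖ ^ 2 - ‖vs - v (t + 1)‖ ^ 2)
      ≥ (deltaNT μf Lf α ε (lamMax (IWmat p W))) ^ 2 * (ε - α * lamMax (IWmat p W))
            * ‖x t - x (t + 1)‖ ^ 2
        + (1 / α) * ‖v (t + 1) - v t‖ ^ 2
        + μf * deltaNT μf Lf α ε (lamMax (IWmat p W))
            / (1 + deltaNT μf Lf α ε (lamMax (IWmat p W))) * ‖xs - x (t + 1)‖ ^ 2 := by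
  intro t
  set A := Matrix.toEuclideanLin (IWmat p W)
  set s := x t - x (t + 1)
  set b := xs - x (t + 1)
  rw [ge_iff_le, newton_tracking_descent_identity
    (Matrix.isSymmetric_toEuclideanLin_iff.mpr hpsd.isHermitian_sqrt)
    hpsd.toEuclideanLin_sqrt_sqrt hα.ne' (hprimal t) (hdual t) hK1 hK2]
  have hQ : (ε - α * lamMax (IWmat p W)) * ‖s‖ ^ 2 ≤ ⟪s, ε • s - α • A s⟫_ℝ := by
    have := hpsd.isHermitian.inner_toEuclideanLin_self_le_lamMax s
    rw [inner_sub_right, real_inner_smul_right, real_inner_smul_right, real_inner_self_eq_norm_sq]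
    linarith [mul_le_mul_of_nonneg_left this hα.le]
  have hres : ⟪b, aggGrad g (x t) - aggGrad g (x (t + 1)) - aggHess h (x t) s⟫_ℝ
      ≤ ‖b‖ * (2 * Lf * ‖s‖) :=
    (real_inner_le_norm _ _).trans <| mul_le_mul_of_nonneg_left
      (norm_aggGrad_newton_residual_le hg hh (hμpos.le.trans hμL)
        (fun i z w ↦ (mul_nonneg hμpos.le (sq_nonneg _)).trans (hlow i z w)) hup _ _)
      (norm_nonneg b)
  have hmono : μf * ‖b‖ ^ 2 ≤ ⟪b, aggGrad g xs - aggGrad g (x (t + 1))⟫_ℝ := by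
    rw [real_inner_comm]
    exact mul_norm_sub_sq_le_inner_aggGrad_sub hh hlow xs (x (t + 1))
  have hsplit : ⟪b, aggGrad g xs - aggGrad g (x t) + aggHess h (x t) s⟫_ℝ
      = ⟪b, aggGrad g xs - aggGrad g (x (t + 1))⟫_ℝ
        - ⟪b, aggGrad g (x t) - aggGrad g (x (t + 1)) - aggHess h (x t) s⟫_ℝ := by
    rw [← inner_sub_right]; congr 1; abel
  linarith [deltaNT_quadratic_bound (a := ‖s‖) (c := ‖b‖) hμpos hcond]

/-- The refined descent inequality (Step 3, equation (a56)) of the Newton tracking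
primal–dual iteration, under `ε − α·λ_max(I−𝐖) > 4L_f²/μ_f`. -/
theorem newton_tracking_refined_descent_inequality
    {n p : ℕ} (hn : 0 < n) (hp : 0 < p)
    (W : Matrix (Fin n) (Fin n) ℝ)
    (hWnonneg : ∀ i j, 0 ≤ W i j) (hWsymm : W.IsSymm)
    (hWstoch : W *ᵥ (fun _ => (1 : ℝ)) = fun _ => 1)
    (hWker : ∀ y : Fin n → ℝ, (1 - W) *ᵥ y = 0 ↔ ∃ c : ℝ, y = fun _ => c)
    (hpsd : (IWmat p W).PosSemidef)
    (f : Fin n → Ep p → ℝ) (g : Fin n → Ep p → Ep p)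
    (h : Fin n → Ep p → (Ep p →L[ℝ] Ep p))
    (μf Lf : ℝ) (hμpos : 0 < μf) (hμL : μf ≤ Lf)
    (hC2 : ∀ i, ContDiff ℝ 2 (f i))
    (hg : ∀ i z, HasGradientAt (f i) (g i z) z)
    (hh : ∀ i z, HasFDerivAt (g i) (h i z) z)
    (hlow : ∀ i z w, μf * ‖w‖ ^ 2 ≤ ⟪(h i z) w, w⟫_ℝ)
    (hup : ∀ i z w, ⟪(h i z) w, w⟫_ℝ ≤ Lf * ‖w‖ ^ 2)
    (α ε : ℝ) (hα : 0 < α) (hε : 0 < ε)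
    (x v : ℕ → Vnp n p)
    (hprimal : ∀ t, aggHess h (x t) (x t - x (t + 1)) + ε • (x t - x (t + 1)) =
      aggGrad g (x t) + Matrix.toEuclideanLin hpsd.sqrt (v t)
        + α • Matrix.toEuclideanLin (IWmat p W) (x t))
    (hdual : ∀ t, v (t + 1) = v t + α • Matrix.toEuclideanLin hpsd.sqrt (x (t + 1)))
    (xs vs : Vnp n p)
    (hK1 : aggGrad g xs + Matrix.toEuclideanLin hpsd.sqrt vs = 0)
    (hK2 : Matrix.toEuclideanLin hpsd.sqrt xs = 0)
    (hcond : 4 * Lf ^ 2 / μf < ε - α * lamMax (IWmat p W)) :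
    ∀ t : ℕ,
      ⟪xs - x t, ε • (xs - x t) - α • Matrix.toEuclideanLin (IWmat p W) (xs - x t)⟫_ℝ
        - ⟪xs - x (t + 1),
            ε • (xs - x (t + 1))
              - α • Matrix.toEuclideanLin (IWmat p W) (xs - x (t + 1))⟫_ℝ
        + (1 / α) * (‖vs - v t‖ ^ 2 - ‖vs - v (t + 1)‖ ^ 2)
      ≥ (deltaNT μf Lf α ε (lamMax (IWmat p W))) ^ 2 * (ε - α * lamMax (IWmat p W))
            * ‖x t - x (t + 1)‖ ^ 2
        + (1 / α) * ‖v (t + 1) - v t‖ ^ 2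
        + μf * deltaNT μf Lf α ε (lamMax (IWmat p W))
            / (1 + deltaNT μf Lf α ε (lamMax (IWmat p W))) * ‖xs - x (t + 1)‖ ^ 2 :=
  newton_tracking_refined_descent_inequality_general W hpsd f g h μf Lf hμpos hμL hg hh hlow hup α ε
    hα x v hprimal hdual xs vs hK1 hK2 hcond
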